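/- Let 1<p<∞ and α<p-1. For every absolutely continuous function u on [0,∞) with u(0)=0, one has ∫₀^∞ |u'(x)|^p x^α dx ≥ ((p-1-α)/p)^p ∫₀^∞ x^{α-p} |u(x)|^p dx. -/

import Mathlib

/-!
With `β = (p - 1 - α) / p` and `F x = ∫₀ˣ |u'|`, Hölder's inequality against the weight `t ^ (β - 1)`
gives `F x ^ p ≤ (x ^ β / β) ^ (p - 1) * ∫₀ˣ |u'| ^ p * t ^ ((1 - β) * (p - 1))`. Multiplying by
`x ^ (α - p)` and exchanging the order of integration, the inner integral
`∫ₜ^∞ x ^ (-β - 1) = t ^ (-β) / β` turns the weight back into exactly `t ^ α`, and the powers of `β`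
collect into the constant `β ^ p`.
-/

open MeasureTheory Set
open scoped ENNReal

theorem ENNReal.rpow_lintegral_le_lintegral_mul_rpow_weight {X : Type*} [MeasurableSpace X]
    {μ : Measure X} {p : ℝ} (hp : 1 < p) {f w : X → ℝ≥0∞} (hf : AEMeasurable f μ)
    (hw : AEMeasurable w μ) (hw0 : ∀ᵐ x ∂μ, w x ≠ 0) (hwtop : ∀ᵐ x ∂μ, w x ≠ ∞) :
    (∫⁻ x, f x ∂μ) ^ p ≤ (∫⁻ x, f x ^ p * w x ^ (1 - p) ∂μ) * (∫⁻ x, w x ∂μ) ^ (p - 1) := by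
  have hp0 : 0 < p := zero_lt_one.trans hp
  set q := p / (p - 1)
  have hpq : p.HolderConjugate q := Real.HolderConjugate.conjExponent hp
  set s := 1 / q
  have hsp : s * p = p - 1 := by simp only [s, q]; field_simp
  have hsq : s * q = 1 := one_div_mul_cancel hpq.symm.ne_zero
  have hfw : ∫⁻ x, f x ∂μ = ∫⁻ x, (f x * w x ^ (-s)) * w x ^ s ∂μ := by
    refine lintegral_congr_ae ?_
    filter_upwards [hw0, hwtop] with x h0 htop
    rw [mul_assoc, ← ENNReal.rpow_add _ _ h0 htop, neg_add_cancel, ENNReal.rpow_zero, mul_one]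
  have holder := ENNReal.lintegral_mul_le_Lp_mul_Lq μ hpq (hf.mul (hw.pow_const (-s)))
    (hw.pow_const s)
  calc (∫⁻ x, f x ∂μ) ^ p
      ≤ ((∫⁻ x, (f x * w x ^ (-s)) ^ p ∂μ) ^ (1 / p) * (∫⁻ x, (w x ^ s) ^ q ∂μ) ^ s) ^ p := by
        rw [hfw]; exact ENNReal.rpow_le_rpow holder hp0.le
    _ = (∫⁻ x, f x ^ p * w x ^ (1 - p) ∂μ) * (∫⁻ x, w x ∂μ) ^ (p - 1) := by
        rw [ENNReal.mul_rpow_of_nonneg _ _ hp0.le, ← ENNReal.rpow_mul, ← ENNReal.rpow_mul,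
          one_div_mul_cancel hp0.ne', ENNReal.rpow_one, hsp]
        simp_rw [ENNReal.mul_rpow_of_nonneg _ _ hp0.le, ← ENNReal.rpow_mul, hsq, ENNReal.rpow_one,
          neg_mul, hsp, neg_sub]

theorem lintegral_Ioc_zero_ofReal_rpow {β : ℝ} (hβ : 0 < β) {x : ℝ} (hx : 0 ≤ x) :
    ∫⁻ t in Ioc 0 x, ENNReal.ofReal (t ^ (β - 1)) = ENNReal.ofReal (x ^ β / β) := by
  have hr : -1 < β - 1 := by linarith
  rw [← ofReal_integral_eq_lintegral_ofReal (intervalIntegral.intervalIntegrable_rpow' hr).1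
      (ae_restrict_of_forall_mem measurableSet_Ioc fun t ht => Real.rpow_nonneg ht.1.le _),
    ← intervalIntegral.integral_of_le hx, integral_rpow (Or.inl hr), sub_add_cancel,
    Real.zero_rpow hβ.ne', sub_zero]

theorem lintegral_Ici_ofReal_rpow {β : ℝ} (hβ : 0 < β) {t : ℝ} (ht : 0 < t) :
    ∫⁻ x in Ici t, ENNReal.ofReal (x ^ (-β - 1)) = ENNReal.ofReal (t ^ (-β) / β) := by
  have hc : -β - 1 < -1 := by linarith
  rw [← Measure.restrict_congr_set Ioi_ae_eq_Ici,
    ← ofReal_integral_eq_lintegral_ofReal (integrableOn_Ioi_rpow_of_lt hc ht)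
      (ae_restrict_of_forall_mem measurableSet_Ioi fun x hx =>
        Real.rpow_nonneg (ht.trans hx).le _),
    integral_Ioi_rpow_of_lt hc ht, sub_add_cancel, neg_div_neg_eq]

theorem lintegral_mul_lintegral_Ioc_swap (a : ℝ) {g h : ℝ → ℝ≥0∞} (hg : Measurable g)
    (hh : Measurable h) :
    ∫⁻ x in Ioi a, g x * ∫⁻ t in Ioc a x, h t = ∫⁻ t in Ioi a, h t * ∫⁻ x in Ici t, g x := by
  have hK : Measurable (Function.uncurry fun x t : ℝ => if t ≤ x then g x * h t else 0) :=
    Measurable.ite (measurableSet_le measurable_snd measurable_fst)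
      ((hg.comp measurable_fst).mul (hh.comp measurable_snd)) measurable_const
  calc ∫⁻ x in Ioi a, g x * ∫⁻ t in Ioc a x, h t
      = ∫⁻ x in Ioi a, ∫⁻ t in Ioi a, (Iic x).indicator (fun t => g x * h t) t := by
        simp_rw [setLIntegral_indicator measurableSet_Iic, Iic_inter_Ioi,
          lintegral_const_mul _ hh]
    -- both indicators unfold to `if t ≤ x then g x * h t else 0`
    _ = ∫⁻ t in Ioi a, ∫⁻ x in Ioi a, (Ici t).indicator (fun x => g x * h t) x :=
        lintegral_lintegral_swap hK.aemeasurable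
    _ = ∫⁻ t in Ioi a, h t * ∫⁻ x in Ici t, g x := by
        refine setLIntegral_congr_fun measurableSet_Ioi fun t ht => ?_
        rw [setLIntegral_indicator measurableSet_Ici,
          inter_eq_left.mpr (Ici_subset_Ioi.mpr ht), lintegral_mul_const _ hg, mul_comm]

theorem rpow_lintegral_Ioc_zero_le {p β : ℝ} (hp : 1 < p) (hβ : 0 < β) {f : ℝ → ℝ≥0∞}
    (hf : Measurable f) {x : ℝ} (hx : 0 ≤ x) :
    (∫⁻ t in Ioc 0 x, f t) ^ p ≤ ENNReal.ofReal ((x ^ β / β) ^ (p - 1)) *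
      ∫⁻ t in Ioc 0 x, f t ^ p * ENNReal.ofReal (t ^ ((1 - β) * (p - 1))) := by
  refine (ENNReal.rpow_lintegral_le_lintegral_mul_rpow_weight
    (w := fun t => ENNReal.ofReal (t ^ (β - 1))) hp hf.aemeasurable
    (measurable_id.pow_const _).ennreal_ofReal.aemeasurable ?_ ?_).trans_eq ?_
  · exact ae_restrict_of_forall_mem measurableSet_Ioc fun t ht =>
      (ENNReal.ofReal_pos.mpr (Real.rpow_pos_of_pos ht.1 _)).ne'
  · exact ae_of_all _ fun _ => ENNReal.ofReal_ne_top
  rw [lintegral_Ioc_zero_ofReal_rpow hβ hx,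
    ENNReal.ofReal_rpow_of_nonneg (by positivity) (by linarith), mul_comm]
  congr 1
  refine setLIntegral_congr_fun measurableSet_Ioc fun t ht => ?_
  rw [ENNReal.ofReal_rpow_of_pos (Real.rpow_pos_of_pos ht.1 _), ← Real.rpow_mul ht.1.le]
  ring_nf

theorem lintegral_hardy {p α : ℝ} (hp : 1 < p) (hα : α < p - 1) {f : ℝ → ℝ≥0∞}
    (hf : Measurable f) :
    ENNReal.ofReal (((p - 1 - α) / p) ^ p) *
        ∫⁻ x in Ioi 0, ENNReal.ofReal (x ^ (α - p)) * (∫⁻ t in Ioc 0 x, f t) ^ p ≤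
      ∫⁻ x in Ioi 0, f x ^ p * ENNReal.ofReal (x ^ α) := by
  set β := (p - 1 - α) / p
  have hp0 : 0 < p := zero_lt_one.trans hp
  have hβ : 0 < β := div_pos (by linarith) hp0
  have hβp : β * p = p - 1 - α := div_mul_cancel₀ _ hp0.ne'
  have hG : Measurable fun t => f t ^ p * ENNReal.ofReal (t ^ ((1 - β) * (p - 1))) :=
    (hf.pow_const p).mul (measurable_id.pow_const _).ennreal_ofReal
  calc ENNReal.ofReal (β ^ p) *
        ∫⁻ x in Ioi 0, ENNReal.ofReal (x ^ (α - p)) * (∫⁻ t in Ioc 0 x, f t) ^ p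
      = ∫⁻ x in Ioi 0, ENNReal.ofReal (β ^ p * x ^ (α - p)) * (∫⁻ t in Ioc 0 x, f t) ^ p := by
        rw [← lintegral_const_mul' _ _ ENNReal.ofReal_ne_top]
        refine setLIntegral_congr_fun measurableSet_Ioi fun x hx => ?_
        rw [← mul_assoc, ← ENNReal.ofReal_mul (by positivity)]
    _ ≤ ∫⁻ x in Ioi 0, ENNReal.ofReal (β ^ p * x ^ (α - p)) *
          (ENNReal.ofReal ((x ^ β / β) ^ (p - 1)) *
            ∫⁻ t in Ioc 0 x, f t ^ p * ENNReal.ofReal (t ^ ((1 - β) * (p - 1)))) := by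
        refine setLIntegral_mono' measurableSet_Ioi fun x hx => ?_
        gcongr
        exact rpow_lintegral_Ioc_zero_le hp hβ hf (le_of_lt hx)
    _ = ∫⁻ x in Ioi 0, ENNReal.ofReal (β * x ^ (-β - 1)) *
          ∫⁻ t in Ioc 0 x, f t ^ p * ENNReal.ofReal (t ^ ((1 - β) * (p - 1))) := by
        refine setLIntegral_congr_fun measurableSet_Ioi fun x (hx : 0 < x) => ?_
        have hweight : β ^ p * x ^ (α - p) * (x ^ β / β) ^ (p - 1) = β * x ^ (-β - 1) := by
          have hexp : α - p + β * (p - 1) = -β - 1 := by linear_combination hβp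
          rw [Real.div_rpow (by positivity) hβ.le, ← Real.rpow_mul hx.le,
            Real.rpow_sub_one hβ.ne', ← hexp, Real.rpow_add hx]
          field_simp
        rw [← mul_assoc, ← ENNReal.ofReal_mul (by positivity), hweight]
    _ = ∫⁻ t in Ioi 0, f t ^ p * ENNReal.ofReal (t ^ ((1 - β) * (p - 1))) *
          ∫⁻ x in Ici t, ENNReal.ofReal (β * x ^ (-β - 1)) :=
        lintegral_mul_lintegral_Ioc_swap 0
          (measurable_const.mul (measurable_id.pow_const _)).ennreal_ofReal hG
    _ = ∫⁻ x in Ioi 0, f x ^ p * ENNReal.ofReal (x ^ α) := by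
        refine setLIntegral_congr_fun measurableSet_Ioi fun t (ht : 0 < t) => ?_
        simp_rw [ENNReal.ofReal_mul hβ.le]
        rw [lintegral_const_mul' _ _ ENNReal.ofReal_ne_top, lintegral_Ici_ofReal_rpow hβ ht,
          mul_assoc, ← ENNReal.ofReal_mul hβ.le, ← ENNReal.ofReal_mul (by positivity),
          mul_div_cancel₀ _ hβ.ne', ← Real.rpow_add ht]
        congr 3
        linear_combination -hβp

theorem stmt_0_general (p α : ℝ) (hp : 1 < p) (hα : α < p - 1)
    (u u' : ℝ → ℝ) (hmeas : Measurable u')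
    (hrep : ∀ x ≥ (0:ℝ), u x = ∫ t in (0:ℝ)..x, u' t) :
    ENNReal.ofReal (((p - 1 - α) / p) ^ p) *
      ∫⁻ x in Ioi (0:ℝ), ENNReal.ofReal (x ^ (α - p) * |u x| ^ p) ≤
      ∫⁻ x in Ioi (0:ℝ), ENNReal.ofReal (|u' x| ^ p * x ^ α) := by
  have hp0 : 0 ≤ p := by linarith
  calc _ ≤ ENNReal.ofReal (((p - 1 - α) / p) ^ p) *
          ∫⁻ x in Ioi (0:ℝ), ENNReal.ofReal (x ^ (α - p)) * (∫⁻ t in Ioc 0 x, ‖u' t‖ₑ) ^ p := by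
        gcongr 1
        refine setLIntegral_mono' measurableSet_Ioi fun x (hx : 0 < x) => ?_
        have hu : ‖u x‖ₑ ≤ ∫⁻ t in Ioc 0 x, ‖u' t‖ₑ := by
          rw [hrep x hx.le, intervalIntegral.integral_of_le hx.le]
          exact enorm_integral_le_lintegral_enorm _
        rw [ENNReal.ofReal_mul (by positivity), ← ENNReal.ofReal_rpow_of_nonneg (abs_nonneg _) hp0,
          ← Real.enorm_eq_ofReal_abs]
        gcongr
    _ ≤ ∫⁻ x in Ioi 0, ‖u' x‖ₑ ^ p * ENNReal.ofReal (x ^ α) := lintegral_hardy hp hα hmeas.enorm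
    _ = _ := by
        refine setLIntegral_congr_fun measurableSet_Ioi fun x (hx : 0 < x) => ?_
        rw [ENNReal.ofReal_mul (by positivity), ← ENNReal.ofReal_rpow_of_nonneg (abs_nonneg _) hp0,
          ← Real.enorm_eq_ofReal_abs]

/-- Classical weighted Hardy inequality on the half line: if `u` is absolutely
continuous on `[0,∞)` with `u 0 = 0` (encoded by `u x = ∫ t in 0..x, u' t` with
`u'` locally integrable), `1 < p` and `α < p - 1`, then
`∫₀^∞ |u'| ^ p x ^ α ≥ ((p-1-α)/p)^p ∫₀^∞ x^(α-p) |u|^p`. -/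
theorem stmt_0 (p α : ℝ) (hp : 1 < p) (hα : α < p - 1)
    (u u' : ℝ → ℝ) (hmeas : Measurable u')
    (hint : ∀ x ≥ (0:ℝ), IntervalIntegrable u' volume 0 x)
    (hrep : ∀ x ≥ (0:ℝ), u x = ∫ t in (0:ℝ)..x, u' t) :
    ENNReal.ofReal (((p - 1 - α) / p) ^ p) *
      ∫⁻ x in Ioi (0:ℝ), ENNReal.ofReal (x ^ (α - p) * |u x| ^ p) ≤
      ∫⁻ x in Ioi (0:ℝ), ENNReal.ofReal (|u' x| ^ p * x ^ α) :=
  stmt_0_general p α hp hα u u' hmeas hrep
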